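/- In the reflection equation algebra A_q(M₂): the quantum determinant det_q = u11·u22 − q²·u12·u21 and the quantum trace tr_q = u11 + q^{−2}·u22 are central elements, and u22 is a normal element, i.e. u22·A_q(M₂) = A_q(M₂)·u22. -/

import Mathlib

noncomputable section

open FreeAlgebra MulOpposite

/-- The relations of the reflection equation algebra of rank 2:
`u11·u22 = u22·u11`, `u22·u12 = q²·u12·u22`, `u21·u22 = q²·u22·u21`,
`u11·u12 = u12·(u11 + (q^{−2}−1)·u22)`, `u21·u11 = (u11 + (q^{−2}−1)·u22)·u21`,
`u21·u12 − u12·u21 = (q^{−2}−1)·u22·(u22 − u11)`, where the generators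
`u11, u12, u21, u22` are the images of `0, 1, 2, 3 : Fin 4`. -/
inductive REArel {K : Type*} [Field K] (q : K) :
    FreeAlgebra K (Fin 4) → FreeAlgebra K (Fin 4) → Prop
  | r1 : REArel q (ι K (0 : Fin 4) * ι K (3 : Fin 4)) (ι K (3 : Fin 4) * ι K (0 : Fin 4))
  | r2 : REArel q (ι K (3 : Fin 4) * ι K (1 : Fin 4))
      (q ^ 2 • (ι K (1 : Fin 4) * ι K (3 : Fin 4)))
  | r3 : REArel q (ι K (2 : Fin 4) * ι K (3 : Fin 4))
      (q ^ 2 • (ι K (3 : Fin 4) * ι K (2 : Fin 4)))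
  | r4 : REArel q (ι K (0 : Fin 4) * ι K (1 : Fin 4))
      (ι K (1 : Fin 4) * (ι K (0 : Fin 4) + (q⁻¹ ^ 2 - 1) • ι K (3 : Fin 4)))
  | r5 : REArel q (ι K (2 : Fin 4) * ι K (0 : Fin 4))
      ((ι K (0 : Fin 4) + (q⁻¹ ^ 2 - 1) • ι K (3 : Fin 4)) * ι K (2 : Fin 4))
  | r6 : REArel q (ι K (2 : Fin 4) * ι K (1 : Fin 4))
      (ι K (1 : Fin 4) * ι K (2 : Fin 4) +
        (q⁻¹ ^ 2 - 1) • (ι K (3 : Fin 4) * (ι K (3 : Fin 4) - ι K (0 : Fin 4))))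

/-- The reflection equation algebra `A_q(M₂)` of rank 2: the quotient of the free
`K`-algebra on four generators by the two-sided ideal generated by the relations above. -/
abbrev REA {K : Type*} [Field K] (q : K) := RingQuot (REArel q)

variable {K : Type*} [Field K]

/-- The generator `u11` of `A_q(M₂)`. -/
def u11 (q : K) : REA q := RingQuot.mkAlgHom K (REArel q) (ι K (0 : Fin 4))
/-- The generator `u12` of `A_q(M₂)`. -/
def u12 (q : K) : REA q := RingQuot.mkAlgHom K (REArel q) (ι K (1 : Fin 4))
/-- The generator `u21` of `A_q(M₂)`. -/
def u21 (q : K) : REA q := RingQuot.mkAlgHom K (REArel q) (ι K (2 : Fin 4))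
/-- The generator `u22` of `A_q(M₂)`. -/
def u22 (q : K) : REA q := RingQuot.mkAlgHom K (REArel q) (ι K (3 : Fin 4))

/-!
Both claims only need to be checked on the generators `u11, u12, u21, u22`, which generate
`A_q(M₂)` as a `K`-algebra: an element commuting with every generator is central, and `u22` is
normal because `u22 · g` and `g · u22` differ by the unit `1`, `q²`, `q⁻²` or `1` for each
generator `g`. That `det_q` and `tr_q` commute with a generator is checked by rewriting both
sides with the defining relations into the normal order `u12 < u11 < u22 < u21` and comparing
coefficients.
-/

theorem RingQuot.adjoin_range_mkAlgHom_ι {R X : Type*} [CommSemiring R]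
    (r : FreeAlgebra R X → FreeAlgebra R X → Prop) :
    Algebra.adjoin R (Set.range (RingQuot.mkAlgHom R r ∘ ι R)) = ⊤ := by
  rw [Set.range_comp, ← AlgHom.map_adjoin, FreeAlgebra.adjoin_range_ι, Algebra.map_top,
    AlgHom.range_eq_top]
  exact RingQuot.mkAlgHom_surjective R r

section Normalizing

variable {R A : Type*} [CommSemiring R] [Semiring A] [Algebra R A] {s : Set A} {u x : A}

theorem Algebra.exists_mul_eq_mul_left_of_mem_adjoin (hx : x ∈ Algebra.adjoin R s)
    (hs : ∀ a ∈ s, ∃ b, u * a = b * u) : ∃ y, u * x = y * u := by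
  induction hx using Algebra.adjoin_induction with
  | mem a ha => exact hs a ha
  | algebraMap r => exact ⟨algebraMap R A r, (Algebra.commutes r u).symm⟩
  | add a b _ _ ha hb =>
    obtain ⟨a', ha⟩ := ha
    obtain ⟨b', hb⟩ := hb
    exact ⟨a' + b', by rw [mul_add, ha, hb, add_mul]⟩
  | mul a b _ _ ha hb =>
    obtain ⟨a', ha⟩ := ha
    obtain ⟨b', hb⟩ := hb
    exact ⟨a' * b', by rw [← mul_assoc, ha, mul_assoc, hb, mul_assoc]⟩

theorem Algebra.exists_mul_eq_mul_right_of_mem_adjoin (hx : x ∈ Algebra.adjoin R s)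
    (hs : ∀ a ∈ s, ∃ b, a * u = u * b) : ∃ y, x * u = u * y := by
  induction hx using Algebra.adjoin_induction with
  | mem a ha => exact hs a ha
  | algebraMap r => exact ⟨algebraMap R A r, Algebra.commutes r u⟩
  | add a b _ _ ha hb =>
    obtain ⟨a', ha⟩ := ha
    obtain ⟨b', hb⟩ := hb
    exact ⟨a' + b', by rw [add_mul, ha, hb, mul_add]⟩
  | mul a b _ _ ha hb =>
    obtain ⟨a', ha⟩ := ha
    obtain ⟨b', hb⟩ := hb
    exact ⟨a' * b', by rw [mul_assoc, hb, ← mul_assoc, ha, mul_assoc]⟩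

end Normalizing

namespace REA

variable (q : K)

theorem adjoin_generators_eq_top : Algebra.adjoin K {u11 q, u12 q, u21 q, u22 q} = ⊤ := by
  rw [← RingQuot.adjoin_range_mkAlgHom_ι]
  congr
  ext
  simp [Fin.exists_fin_succ, u11, u12, u21, u22, eq_comm]

theorem u22_mul_u11 : u22 q * u11 q = u11 q * u22 q := by
  simpa [u11, u22] using (RingQuot.mkAlgHom_rel K (REArel.r1 (q := q))).symm

theorem u22_mul_u12 : u22 q * u12 q = q ^ 2 • (u12 q * u22 q) := by
  simpa [u12, u22] using RingQuot.mkAlgHom_rel K (REArel.r2 (q := q))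

theorem u21_mul_u22 : u21 q * u22 q = q ^ 2 • (u22 q * u21 q) := by
  simpa [u21, u22] using RingQuot.mkAlgHom_rel K (REArel.r3 (q := q))

theorem u11_mul_u12 : u11 q * u12 q = u12 q * u11 q + (q⁻¹ ^ 2 - 1) • (u12 q * u22 q) := by
  simpa [u11, u12, u22, mul_add, mul_smul_comm] using
    RingQuot.mkAlgHom_rel K (REArel.r4 (q := q))

theorem u21_mul_u11 : u21 q * u11 q = u11 q * u21 q + (q⁻¹ ^ 2 - 1) • (u22 q * u21 q) := by
  simpa [u11, u21, u22, add_mul, smul_mul_assoc] using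
    RingQuot.mkAlgHom_rel K (REArel.r5 (q := q))

theorem u21_mul_u12 : u21 q * u12 q =
    u12 q * u21 q + (q⁻¹ ^ 2 - 1) • (u22 q * u22 q) - (q⁻¹ ^ 2 - 1) • (u11 q * u22 q) := by
  have h := RingQuot.mkAlgHom_rel K (REArel.r6 (q := q))
  simp only [map_mul, map_add, map_smul, map_sub, mul_sub, smul_sub] at h
  rw [← u22_mul_u11, add_sub_assoc]
  exact h

section RightAssociated

variable (x : REA q)

theorem u22_mul_u11_mul : u22 q * (u11 q * x) = u11 q * (u22 q * x) := by
  rw [← mul_assoc, u22_mul_u11, mul_assoc]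

theorem u22_mul_u12_mul : u22 q * (u12 q * x) = q ^ 2 • (u12 q * (u22 q * x)) := by
  rw [← mul_assoc, u22_mul_u12, smul_mul_assoc, mul_assoc]

theorem u21_mul_u22_mul : u21 q * (u22 q * x) = q ^ 2 • (u22 q * (u21 q * x)) := by
  rw [← mul_assoc, u21_mul_u22, smul_mul_assoc, mul_assoc]

theorem u11_mul_u12_mul :
    u11 q * (u12 q * x) = u12 q * (u11 q * x) + (q⁻¹ ^ 2 - 1) • (u12 q * (u22 q * x)) := by
  rw [← mul_assoc, u11_mul_u12, add_mul, smul_mul_assoc, mul_assoc, mul_assoc]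

theorem u21_mul_u11_mul :
    u21 q * (u11 q * x) = u11 q * (u21 q * x) + (q⁻¹ ^ 2 - 1) • (u22 q * (u21 q * x)) := by
  rw [← mul_assoc, u21_mul_u11, add_mul, smul_mul_assoc, mul_assoc, mul_assoc]

theorem u21_mul_u12_mul : u21 q * (u12 q * x) = u12 q * (u21 q * x) +
    (q⁻¹ ^ 2 - 1) • (u22 q * (u22 q * x)) - (q⁻¹ ^ 2 - 1) • (u11 q * (u22 q * x)) := by
  rw [← mul_assoc, u21_mul_u12, sub_mul, add_mul, smul_mul_assoc, smul_mul_assoc,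
    mul_assoc, mul_assoc, mul_assoc]

end RightAssociated

theorem commute_of_commute_generators {z : REA q} (h11 : Commute z (u11 q))
    (h12 : Commute z (u12 q)) (h21 : Commute z (u21 q)) (h22 : Commute z (u22 q)) (x : REA q) :
    Commute z x :=
  Algebra.commute_of_mem_adjoin_of_forall_mem_commute (R := K)
    (adjoin_generators_eq_top q ▸ Algebra.mem_top) (by simp [h11, h12, h21, h22])

def detq : REA q := u11 q * u22 q - q ^ 2 • (u12 q * u21 q)

def trq : REA q := u11 q + q⁻¹ ^ 2 • u22 q

theorem commute_detq (hq : q ≠ 0) (x : REA q) : Commute (detq q) x := by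
  refine commute_of_commute_generators q ?_ ?_ ?_ ?_ x
  all_goals
    simp only [Commute, SemiconjBy, detq, u22_mul_u11, u22_mul_u12, u21_mul_u22, u21_mul_u11,
      u21_mul_u12, u22_mul_u11_mul, u22_mul_u12_mul, u11_mul_u12_mul, u21_mul_u11_mul,
      u21_mul_u12_mul, mul_add, mul_sub, sub_mul, smul_add, smul_sub, smul_smul, mul_smul_comm,
      smul_mul_assoc, mul_assoc]
  all_goals match_scalars <;> field_simp <;> ring

theorem commute_trq (hq : q ≠ 0) (x : REA q) : Commute (trq q) x := by
  refine commute_of_commute_generators q ?_ ?_ ?_ ?_ x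
  all_goals
    simp only [Commute, SemiconjBy, trq, u22_mul_u11, u22_mul_u12, u21_mul_u22, u11_mul_u12,
      u21_mul_u11, mul_add, add_mul, smul_smul, mul_smul_comm, smul_mul_assoc]
  all_goals match_scalars <;> simp [hq]

theorem exists_u22_mul_eq_mul_u22 (hq : q ≠ 0) (x : REA q) : ∃ y, u22 q * x = y * u22 q := by
  refine Algebra.exists_mul_eq_mul_left_of_mem_adjoin (R := K)
    (adjoin_generators_eq_top q ▸ Algebra.mem_top) ?_
  simp only [Set.mem_insert_iff, Set.mem_singleton_iff, forall_eq_or_imp, forall_eq]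
  refine ⟨⟨u11 q, u22_mul_u11 q⟩, ⟨q ^ 2 • u12 q, ?_⟩, ⟨q⁻¹ ^ 2 • u21 q, ?_⟩, ⟨u22 q, rfl⟩⟩
  · rw [u22_mul_u12, smul_mul_assoc]
  · rw [smul_mul_assoc, u21_mul_u22, smul_smul, inv_pow, inv_mul_cancel₀ (pow_ne_zero 2 hq),
      one_smul]

theorem exists_mul_u22_eq_u22_mul (hq : q ≠ 0) (x : REA q) : ∃ y, x * u22 q = u22 q * y := by
  refine Algebra.exists_mul_eq_mul_right_of_mem_adjoin (R := K)
    (adjoin_generators_eq_top q ▸ Algebra.mem_top) ?_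
  simp only [Set.mem_insert_iff, Set.mem_singleton_iff, forall_eq_or_imp, forall_eq]
  refine ⟨⟨u11 q, (u22_mul_u11 q).symm⟩, ⟨q⁻¹ ^ 2 • u12 q, ?_⟩, ⟨q ^ 2 • u21 q, ?_⟩, ⟨u22 q, rfl⟩⟩
  · rw [mul_smul_comm, u22_mul_u12, smul_smul, inv_pow, inv_mul_cancel₀ (pow_ne_zero 2 hq),
      one_smul]
  · rw [u21_mul_u22, mul_smul_comm]

end REA

/-- In the reflection equation algebra `A_q(M₂)`, the quantum
determinant `det_q = u11·u22 − q²·u12·u21` and the quantum trace `tr_q = u11 + q^{−2}·u22`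
are central, and `u22` is a normal element, i.e. `u22·A_q(M₂) = A_q(M₂)·u22`. -/
theorem REA_detq_trq_central_u22_normal (q : K) (hq : q ≠ 0) :
    (∀ x : REA q, (u11 q * u22 q - q ^ 2 • (u12 q * u21 q)) * x =
        x * (u11 q * u22 q - q ^ 2 • (u12 q * u21 q))) ∧
    (∀ x : REA q, (u11 q + q⁻¹ ^ 2 • u22 q) * x = x * (u11 q + q⁻¹ ^ 2 • u22 q)) ∧
    Set.range (fun a : REA q => u22 q * a) = Set.range (fun a : REA q => a * u22 q) := by
  refine ⟨REA.commute_detq q hq, REA.commute_trq q hq, Set.ext fun y => ⟨?_, ?_⟩⟩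
  · rintro ⟨a, rfl⟩
    exact (REA.exists_u22_mul_eq_mul_u22 q hq a).imp fun _ ↦ Eq.symm
  · rintro ⟨a, rfl⟩
    exact (REA.exists_mul_u22_eq_u22_mul q hq a).imp fun _ ↦ Eq.symm
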